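/- arXiv:1801.04484 — 4 statements merged into one kernel-verified Lean document; each statement's English description precedes it below -/
import Mathlib

section
/- Let G be a residually finite group and let M be a finitely generated module over the integral group ring ℤG that is torsion-free as an abelian group. Let f : (ℤG)^r → M be a surjective homomorphism of ℤG-modules. Then f is an isomorphism if and only if for every subgroup H of finite index in G, the minimal number of generators of M as a ℤH-module (under the restricted action) equals r·[G:H]. -/
set_option maxHeartbeats 1000000

/-- A group `G` is residually finite if every nontrivial element avoids some
normal subgroup of finite index. -/
def ResiduallyFinite (G : Type*) [Group G] : Prop :=
  ∀ g : G, g ≠ 1 → ∃ N : Subgroup G, N.Normal ∧ N.FiniteIndex ∧ g ∉ N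

/-- The minimal number of generators of an `R`-module `M`: the least `n` such that
there is a surjective `R`-linear map `R^n → M`. -/
noncomputable def minNumGen (R M : Type*) [Ring R] [AddCommGroup M] [Module R M] : ℕ :=
  sInf {n : ℕ | ∃ φ : (Fin n → R) →ₗ[R] M, Function.Surjective φ}

section Gen

variable {R M N : Type*} [Ring R] [AddCommGroup M] [Module R M] [AddCommGroup N] [Module R N]

/-- the linear map `(ι → R) → M` sending `u` to `∑ u i • v i`. -/
def piCombo {ι : Type*} [Fintype ι] (v : ι → M) : (ι → R) →ₗ[R] M where
  toFun u := ∑ i, u i • v i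
  map_add' u w := by simp [add_smul, Finset.sum_add_distrib]
  map_smul' c u := by simp [Finset.smul_sum, mul_smul]

lemma piCombo_single {ι : Type*} [Fintype ι] [DecidableEq ι] (v : ι → M) (i : ι) :
    piCombo (R := R) v (Pi.single i 1) = v i := by
  simp only [piCombo, LinearMap.coe_mk, AddHom.coe_mk]
  rw [Finset.sum_eq_single i]
  · simp
  · intro b _ hb; simp [Pi.single_apply, hb]
  · simp

lemma surjective_piCombo_of_span {ι : Type*} [Fintype ι] {v : ι → M}
    (hv : Submodule.span R (Set.range v) = ⊤) : Function.Surjective (piCombo (R := R) v) := by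
  classical
  intro m
  have hm : m ∈ Submodule.span R (Set.range v) := hv ▸ Submodule.mem_top
  induction hm using Submodule.span_induction with
  | mem x hx =>
      obtain ⟨i, rfl⟩ := hx
      exact ⟨Pi.single i 1, piCombo_single v i⟩
  | zero => exact ⟨0, by simp⟩
  | add x y _ _ hx hy =>
      obtain ⟨u, hu⟩ := hx; obtain ⟨w, hw⟩ := hy
      exact ⟨u + w, by rw [map_add, hu, hw]⟩
  | smul c x _ hx =>
      obtain ⟨u, hu⟩ := hx
      exact ⟨c • u, by rw [map_smul, hu]⟩

lemma minNumGen_le_of_span {n : ℕ} {v : Fin n → M}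
    (hv : Submodule.span R (Set.range v) = ⊤) : minNumGen R M ≤ n :=
  Nat.sInf_le ⟨piCombo v, surjective_piCombo_of_span hv⟩

end Gen

section LemB

variable {Γ : Type*} [Group Γ]

lemma lemB {k m : ℕ}
    (φ : (Fin k → MonoidAlgebra ℤ Γ) →ₗ[MonoidAlgebra ℤ Γ] (Fin m → MonoidAlgebra ℤ Γ))
    (hφ : Function.Surjective φ) : m ≤ k := by
  classical
  set S := MonoidAlgebra ℤ Γ
  let ε : S →ₐ[ℤ] ℤ := MonoidAlgebra.lift ℤ ℤ Γ 1
  let w : Fin k → (Fin m → ℤ) := fun i j => ε (φ (Pi.single i 1) j)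
  have hspan : Submodule.span ℤ (Set.range w) = ⊤ := by
    rw [eq_top_iff]
    rintro u -
    obtain ⟨y, hy⟩ := hφ (fun j => algebraMap ℤ S (u j))
    have hyrep : y = ∑ i, y i • (Pi.single i (1 : S) : Fin k → S) := by
      funext j
      simp [Pi.single_apply, Finset.sum_apply]
    have : ∀ j, u j = ∑ i, ε (y i) * w i j := by
      intro j
      have : φ y j = ∑ i, y i * φ (Pi.single i 1) j := by
        conv_lhs => rw [hyrep]
        rw [map_sum]
        simp [Finset.sum_apply]
      have h2 : u j = ε (φ y j) := by
        rw [hy]; simp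
      rw [h2, this, map_sum]
      simp [w]
    have : u = ∑ i, ε (y i) • w i := by
      funext j
      rw [this j]
      simp [Finset.sum_apply, smul_eq_mul]
    rw [this]
    exact Submodule.sum_mem _ fun i _ => Submodule.smul_mem _ _
      (Submodule.subset_span (Set.mem_range_self i))
  have := finrank_le_of_span_eq_top hspan
  simpa using this

end LemB

open Submodule in
lemma lemC {I : Type*} [Fintype I] {c : I → ℤ} (hc : c ≠ 0)
    (hprim : ∀ k t : ℤ, (∀ α, k ∣ t * c α) → k ∣ t) :
    ∃ v : Fin (Fintype.card I - 1) → (I → ℤ),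
      Submodule.span ℤ (insert c (Set.range v)) = ⊤ := by
  classical
  set L : Submodule ℤ (I → ℤ) := Submodule.span ℤ {c} with hL
  haveI : NoZeroSMulDivisors ℤ ((I → ℤ) ⧸ L) := by
    constructor
    rintro k q hkq
    by_cases hk : k = 0
    · exact Or.inl hk
    right
    obtain ⟨w, rfl⟩ := Submodule.Quotient.mk_surjective L q
    have hmem : k • w ∈ L := by
      rwa [← Submodule.Quotient.mk_eq_zero, Submodule.Quotient.mk_smul]
    obtain ⟨t, ht⟩ := Submodule.mem_span_singleton.mp hmem
    have hdvd : ∀ α, k ∣ t * c α := fun α =>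
      ⟨w α, by have := congrFun ht α; simp only [Pi.smul_apply, smul_eq_mul] at this; omega⟩
    obtain ⟨s, rfl⟩ := hprim k t hdvd
    have hw : w = s • c := by
      refine smul_right_injective (I → ℤ) hk ?_
      show k • w = k • (s • c)
      rw [← ht, smul_smul]
    rw [Submodule.Quotient.mk_eq_zero, hw]
    exact Submodule.smul_mem _ _ (Submodule.mem_span_singleton_self c)
  haveI : Module.Finite ℤ ((I → ℤ) ⧸ L) := Module.Finite.quotient ℤ L
  haveI : Module.Free ℤ ((I → ℤ) ⧸ L) := Module.free_of_finite_type_torsion_free'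
  obtain ⟨s, hs⟩ := Module.projective_lifting_property L.mkQ LinearMap.id
    (Submodule.Quotient.mk_surjective L)
  have hsec : ∀ q, L.mkQ (s q) = q := fun q => by
    rw [← LinearMap.comp_apply, hs]; rfl
  have hsinj : Function.Injective s := fun a b hab => by
    have := congrArg L.mkQ hab; rwa [hsec, hsec] at this
  have hcompl : IsCompl L (LinearMap.range s) := by
    constructor
    · rw [disjoint_iff]
      ext x
      simp only [Submodule.mem_inf, Submodule.mem_bot]
      constructor
      · rintro ⟨hxL, ⟨q, rfl⟩⟩
        have : q = 0 := by
          rw [← hsec q, Submodule.mkQ_apply, Submodule.Quotient.mk_eq_zero]; exact hxL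
        rw [this, map_zero]
      · rintro rfl; exact ⟨L.zero_mem, 0, map_zero s⟩
    · rw [codisjoint_iff, eq_top_iff]
      rintro w -
      have h1 : w - s (L.mkQ w) ∈ L := by
        rw [← Submodule.Quotient.mk_eq_zero]
        simp only [← Submodule.mkQ_apply, map_sub, hsec, sub_self]
      have : w = (w - s (L.mkQ w)) + s (L.mkQ w) := by abel
      rw [this]
      exact Submodule.add_mem_sup h1 ⟨L.mkQ w, rfl⟩
  have hfin : Module.finrank ℤ ((I → ℤ) ⧸ L) = Fintype.card I - 1 := by
    have e1 : (L × LinearMap.range s) ≃ₗ[ℤ] (I → ℤ) :=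
      Submodule.prodEquivOfIsCompl L (LinearMap.range s) hcompl
    have e2 : ℤ ≃ₗ[ℤ] L := LinearEquiv.toSpanNonzeroSingleton ℤ (I → ℤ) c hc
    have e3 : ((I → ℤ) ⧸ L) ≃ₗ[ℤ] LinearMap.range s := LinearEquiv.ofInjective s hsinj
    haveI : Module.Free ℤ L := Module.Free.of_equiv e2
    haveI : Module.Finite ℤ L := Module.Finite.equiv e2
    haveI : Module.Free ℤ (LinearMap.range s) := Module.Free.of_equiv e3
    haveI : Module.Finite ℤ (LinearMap.range s) := Module.Finite.equiv e3
    have h4 : Module.finrank ℤ (L × LinearMap.range s) = Fintype.card I := by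
      rw [e1.finrank_eq]; simp [Module.finrank_pi]
    rw [Module.finrank_prod, ← e2.finrank_eq, Module.finrank_self] at h4
    rw [← e3.finrank_eq] at h4
    omega
  let b := Module.Free.chooseBasis ℤ ((I → ℤ) ⧸ L)
  have hcard : Fintype.card (Module.Free.ChooseBasisIndex ℤ ((I → ℤ) ⧸ L))
      = Fintype.card I - 1 := by
    rw [← Module.finrank_eq_card_chooseBasisIndex ℤ ((I → ℤ) ⧸ L)]; exact hfin
  let e : Module.Free.ChooseBasisIndex ℤ ((I → ℤ) ⧸ L) ≃ Fin (Fintype.card I - 1) :=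
    Fintype.equivFinOfCardEq hcard
  let v : Fin (Fintype.card I - 1) → (I → ℤ) := fun t =>
    (Submodule.Quotient.mk_surjective L (b (e.symm t))).choose
  have hv : ∀ t, L.mkQ (v t) = b (e.symm t) := fun t =>
    (Submodule.Quotient.mk_surjective L (b (e.symm t))).choose_spec
  refine ⟨v, ?_⟩
  rw [eq_top_iff]
  rintro w -
  have hrep : ∑ j, b.repr (L.mkQ w) j • b j = L.mkQ w := b.sum_repr (L.mkQ w)
  set w' : I → ℤ := ∑ j, b.repr (L.mkQ w) j • v (e j) with hw'
  have hmkw' : L.mkQ w' = L.mkQ w := by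
    rw [hw', map_sum]
    simp only [map_smul, hv]
    simp only [Equiv.symm_apply_apply]
    exact hrep
  have hdiff : w - w' ∈ L := by
    rw [← Submodule.Quotient.mk_eq_zero]
    simp only [← Submodule.mkQ_apply, map_sub, hmkw', sub_self]
  have h1 : w - w' ∈ Submodule.span ℤ (insert c (Set.range v)) :=
    Submodule.span_mono (Set.singleton_subset_iff.mpr (Set.mem_insert c _)) hdiff
  have h2 : w' ∈ Submodule.span ℤ (insert c (Set.range v)) := by
    refine Submodule.sum_mem _ fun j _ => Submodule.smul_mem _ _ ?_
    exact Submodule.subset_span (Set.mem_insert_iff.mpr (Or.inr (Set.mem_range_self _)))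
  have : w = (w - w') + w' := by abel
  rw [this]
  exact Submodule.add_mem _ h1 h2

noncomputable instance instCoeFunMAInt {G : Type*} :
    CoeFun (MonoidAlgebra ℤ G) (fun _ => G → ℤ) := ⟨fun x => ⇑x.coeff⟩

abbrev MonoidAlgebra.support {R G : Type*} [Semiring R] (x : MonoidAlgebra R G) : Finset G :=
  x.coeff.support

section Forward

theorem stmt_0 {G : Type*} [Group G] (hG : ResiduallyFinite G)
    (M : Type*) [AddCommGroup M] [Module (MonoidAlgebra ℤ G) M]
    (hfg : Module.Finite (MonoidAlgebra ℤ G) M)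
    (htf : ∀ (k : ℤ) (x : M), k • x = 0 → k = 0 ∨ x = 0)
    (r : ℕ) (f : (Fin r → MonoidAlgebra ℤ G) →ₗ[MonoidAlgebra ℤ G] M)
    (hf : Function.Surjective f) :
    Function.Bijective f ↔
      ∀ H : Subgroup G, H.FiniteIndex →
        (letI : Module (MonoidAlgebra ℤ ↥H) M :=
          Module.compHom M (MonoidAlgebra.mapDomainRingHom ℤ H.subtype)
         minNumGen (MonoidAlgebra ℤ ↥H) M = r * H.index) := by
  classical
  constructor
  · -- forward direction
    intro hbij H hH
    haveI := hH
    letI : Module (MonoidAlgebra ℤ ↥H) M :=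
      Module.compHom M (MonoidAlgebra.mapDomainRingHom ℤ H.subtype)
    show minNumGen (MonoidAlgebra ℤ ↥H) M = r * H.index
    set R := MonoidAlgebra ℤ G with hR
    set S := MonoidAlgebra ℤ ↥H with hS
    set ρ : S →+* R := MonoidAlgebra.mapDomainRingHom ℤ H.subtype with hρ
    letI : Module S (Fin r → R) := Module.compHom (Fin r → R) ρ
    haveI : Finite (G ⧸ H) := H.finite_quotient_of_finiteIndex
    set Q := Quotient (QuotientGroup.rightRel H) with hQ
    haveI : Finite Q :=
      Finite.of_equiv _ (QuotientGroup.quotientRightRelEquivQuotientLeftRel H).symm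
    letI : Fintype Q := Fintype.ofFinite Q
    have hcard : Fintype.card Q = H.index := by
      rw [← Nat.card_eq_fintype_card,
        Nat.card_congr (QuotientGroup.quotientRightRelEquivQuotientLeftRel H)]
      rfl
    set π : G → Q := Quotient.mk (QuotientGroup.rightRel H) with hπ
    set σ : Q → G := Quotient.out with hσdef
    have hπσ : ∀ q, π (σ q) = q := fun q => Quotient.out_eq q
    have hrel : ∀ {a b : G}, π a = π b → b * a⁻¹ ∈ H := by
      intro a b hab
      have := Quotient.exact hab
      exact (QuotientGroup.rightRel_apply).mp this
    have hmemH : ∀ g : G, g * (σ (π g))⁻¹ ∈ H := fun g => hrel (hπσ (π g))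
    have hclass : ∀ (q : Q) (a : G), a * (σ q)⁻¹ ∈ H → π a = q := by
      intro q a ha
      rw [← hπσ q]
      exact (Quotient.sound ((QuotientGroup.rightRel_apply).mpr ha)).symm
    -- the canonical map
    set Φ : ((Fin r × Q) → S) → (Fin r → R) :=
      fun v i => ∑ q, ρ (v (i, q)) * MonoidAlgebra.single (σ q) 1 with hΦ
    have hρapp : ∀ (w : S) (a : ↥H), ρ w ((a : G)) = w a := by
      intro w a
      show (Finsupp.mapDomain (⇑H.subtype) w.coeff) _ = _
      exact Finsupp.mapDomain_apply Subtype.coe_injective w.coeff a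
    have hρout : ∀ (w : S) (g : G), g ∉ H → ρ w g = 0 := by
      intro w g hg
      show (Finsupp.mapDomain (⇑H.subtype) w.coeff) _ = 0
      refine Finsupp.mapDomain_notin_range _ _ ?_
      rintro ⟨a, rfl⟩
      exact hg a.2
    have hΦcoeff : ∀ (v : (Fin r × Q) → S) (i : Fin r) (g : G),
        Φ v i g = ∑ q, ρ (v (i, q)) (g * (σ q)⁻¹) := by
      intro v i g
      rw [hΦ]
      rw [MonoidAlgebra.coeff_sum, Finsupp.finset_sum_apply]
      refine Finset.sum_congr rfl fun q _ => ?_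
      rw [MonoidAlgebra.coeff_mul_single_apply, mul_one]
    have hΦinj : Function.Injective Φ := by
      have : ∀ v, Φ v = 0 → v = 0 := by
        intro v hv
        funext p
        obtain ⟨i, q₀⟩ := p
        ext h
        have h0 : Φ v i ((h : G) * σ q₀) = 0 := by rw [hv]; rfl
        rw [hΦcoeff] at h0
        rw [Finset.sum_eq_single q₀] at h0
        · rw [mul_inv_cancel_right] at h0
          rw [hρapp] at h0
          exact h0
        · intro q _ hq
          refine hρout _ _ ?_
          intro hmem
          have e1 : π ((h : G) * σ q₀) = q := hclass q ((h : G) * σ q₀) hmem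
          have e2 : π ((h : G) * σ q₀) = q₀ := by
            refine hclass q₀ _ ?_
            rw [mul_inv_cancel_right]
            exact h.2
          exact hq (e1.symm.trans e2)
        · intro hq; exact absurd (Finset.mem_univ q₀) hq
      intro v v' hvv'
      have hsub : Φ (v - v') = 0 := by
        funext i
        show Φ (v - v') i = 0
        have step : Φ (v - v') i = Φ v i - Φ v' i := by
          rw [hΦ]
          simp [sub_mul, Finset.sum_sub_distrib]
        rw [step, congrFun hvv' i, sub_self]
      have := this _ hsub
      exact sub_eq_zero.mp this
    have hΦsurj : Function.Surjective Φ := by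
      intro w
      have hinj : ∀ q : Q, Function.Injective (fun h : ↥H => (h : G) * σ q) := by
        intro q a b hab
        simp only [] at hab
        exact Subtype.coe_injective (mul_right_cancel hab)
      set v₀ : (Fin r × Q) → S := fun p => MonoidAlgebra.comapDomain
        (fun h : ↥H => (h : G) * σ p.2) (hinj p.2) (w p.1) with hv₀
      refine ⟨v₀, ?_⟩
      funext i
      refine MonoidAlgebra.ext (Finsupp.ext fun g => ?_)
      rw [hΦcoeff v₀ i g]
      rw [Finset.sum_eq_single (π g)]
      · have hmem : g * (σ (π g))⁻¹ ∈ H := hmemH g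
        have hcoe : g * (σ (π g))⁻¹ = ((⟨g * (σ (π g))⁻¹, hmem⟩ : ↥H) : G) := rfl
        rw [hcoe, hρapp, hv₀]
        rw [MonoidAlgebra.coeff_comapDomain, Finsupp.comapDomain_apply]
        show w i (g * (σ (π g))⁻¹ * σ (π g)) = w i g
        rw [inv_mul_cancel_right]
      · intro q _ hq
        refine hρout _ _ ?_
        intro hmem
        exact hq ((hclass q g hmem).symm)
      · intro hq; exact absurd (Finset.mem_univ (π g)) hq
    have hΦadd : ∀ u v, Φ (u + v) = Φ u + Φ v := by
      intro u v
      funext i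
      rw [hΦ]
      simp [add_mul, Finset.sum_add_distrib]
    have hΦsmul : ∀ (c : S) (v), Φ (c • v) = c • Φ v := by
      intro c v
      funext i
      show _ = ρ c * Φ v i
      rw [hΦ]
      simp only [Pi.smul_apply, smul_eq_mul, map_mul, Finset.mul_sum, mul_assoc]
    set Φl : ((Fin r × Q) → S) →ₗ[S] (Fin r → R) :=
      { toFun := Φ, map_add' := hΦadd, map_smul' := hΦsmul } with hΦl
    set f' : (Fin r → R) →ₗ[S] M :=
      { toFun := f, map_add' := f.map_add, map_smul' := fun c v => f.map_smul (ρ c) v }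
      with hf'
    have hf'surj : Function.Surjective f' := hf
    set e : (Fin r × Q) ≃ Fin (r * H.index) :=
      Fintype.equivFinOfCardEq (by simp [hcard]) with he
    have hbig : Function.Surjective ⇑((f'.comp Φl).comp
        (LinearEquiv.funCongrLeft S S e : (Fin (r * H.index) → S) ≃ₗ[S] ((Fin r × Q) → S)).toLinearMap) := by
      rw [LinearMap.coe_comp, LinearMap.coe_comp]
      exact Function.Surjective.comp (Function.Surjective.comp hf'surj hΦsurj)
        (LinearEquiv.funCongrLeft S S e).surjective
    have hup : minNumGen S M ≤ r * H.index := Nat.sInf_le ⟨_, hbig⟩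
    have hlow : ∀ n ∈ {n : ℕ | ∃ φ : (Fin n → S) →ₗ[S] M, Function.Surjective φ},
        r * H.index ≤ n := by
      rintro n ⟨φ, hφ⟩
      have fe : (Fin r → R) ≃ₗ[S] M := LinearEquiv.ofBijective f' hbij
      have Φe : ((Fin r × Q) → S) ≃ₗ[S] (Fin r → R) := LinearEquiv.ofBijective Φl ⟨hΦinj, hΦsurj⟩
      set χ : (Fin n → S) →ₗ[S] (Fin (r * H.index) → S) :=
        (LinearEquiv.funCongrLeft S S e.symm).toLinearMap.comp
          (Φe.symm.toLinearMap.comp (fe.symm.toLinearMap.comp φ)) with hχ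
      have hχsurj : Function.Surjective χ := by
        rw [hχ, LinearMap.coe_comp, LinearMap.coe_comp, LinearMap.coe_comp]
        exact ((LinearEquiv.funCongrLeft S S e.symm).surjective.comp
          (Φe.symm.surjective.comp (fe.symm.surjective.comp hφ)))
      exact lemB χ hχsurj
    exact le_antisymm hup (le_csInf ⟨r * H.index, _, hbig⟩ hlow)
  · -- backward direction
    intro hall
    refine ⟨?_, hf⟩
    by_contra hninj
    have hker : LinearMap.ker f ≠ ⊥ := fun h => hninj (LinearMap.ker_eq_bot.mp h)
    obtain ⟨x, hxker, hx0⟩ := (Submodule.ne_bot_iff _).mp hker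
    have hfx : f x = 0 := LinearMap.mem_ker.mp hxker
    have hr : r ≠ 0 := by
      rintro rfl
      exact hx0 (Subsingleton.elim x 0)
    -- content extraction
    set SF : Finset (Fin r × G) := Finset.univ.biUnion
      (fun i : Fin r => (x i).support.image (fun g => (i, g))) with hSF
    have hmemSF : ∀ i g, x i g ≠ 0 → (i, g) ∈ SF := by
      intro i g h
      rw [hSF]
      exact Finset.mem_biUnion.mpr ⟨i, Finset.mem_univ i,
        Finset.mem_image.mpr ⟨g, Finsupp.mem_support_iff.mpr h, rfl⟩⟩
    set d : ℤ := SF.gcd (fun p => x p.1 p.2) with hd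
    have hdvd : ∀ i g, d ∣ x i g := by
      intro i g
      by_cases h : x i g = 0
      · rw [h]; exact dvd_zero d
      · exact Finset.gcd_dvd (hmemSF i g h)
    have hd0 : d ≠ 0 := by
      intro h0
      apply hx0
      funext i
      refine MonoidAlgebra.ext (Finsupp.ext fun g => ?_)
      by_cases h : x i g = 0
      · exact h
      · exact absurd (Finset.gcd_eq_zero_iff.mp (hd ▸ h0) (i, g) (hmemSF i g h)) h
    set y : Fin r → MonoidAlgebra ℤ G :=
      fun i => MonoidAlgebra.ofCoeff (Finsupp.mapRange (fun t => t / d) (by simp) (x i).coeff) with hy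
    have hyapp : ∀ i g, y i g = x i g / d := by
      intro i g
      rw [hy]
      exact Finsupp.mapRange_apply (hf := by simp)
    have hxy : ∀ i g, x i g = d * y i g := by
      intro i g
      rw [hyapp, Int.mul_ediv_cancel' (hdvd i g)]
    have hyx : x = d • y := by
      funext i
      refine MonoidAlgebra.ext (Finsupp.ext fun g => ?_)
      show x i g = (d • y i) g
      rw [MonoidAlgebra.coeff_smul_apply, smul_eq_mul]
      exact hxy i g
    have hy0 : y ≠ 0 := by
      intro h
      apply hx0
      rw [hyx, h, smul_zero]
    have hfy : f y = 0 := by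
      have h1 : d • f y = 0 := by
        rw [← map_zsmul f d y, ← hyx]
        exact hfx
      rcases htf d (f y) h1 with h | h
      · exact absurd h hd0
      · exact h
    have hgcd1 : SF.gcd (fun p => y p.1 p.2) = 1 := by
      have h2 : SF.gcd (fun p => x p.1 p.2) = normalize d * SF.gcd (fun p => y p.1 p.2) := by
        rw [← Finset.gcd_mul_left]
        exact Finset.gcd_congr rfl fun p _ => hxy p.1 p.2
      have hnorm : normalize d = d := hd ▸ Finset.normalize_gcd
      rw [hnorm, ← hd] at h2
      refine mul_left_cancel₀ hd0 ?_
      rw [← h2, mul_one]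
    have hcontent : ∀ k t : ℤ, (∀ i g, k ∣ t * y i g) → k ∣ t := by
      intro k t hk
      have h1 : k ∣ SF.gcd (fun p => t * y p.1 p.2) :=
        Finset.dvd_gcd fun p _ => hk p.1 p.2
      rw [Finset.gcd_mul_left, hgcd1, mul_one] at h1
      exact dvd_normalize_iff.mp h1
    -- residual finiteness gives a separating finite-index subgroup
    set T : Finset G := Finset.univ.biUnion (fun i : Fin r => (y i).support) with hT
    set D : Finset G := ((T ×ˢ T).image (fun p => p.1 * p.2⁻¹)).erase 1 with hD
    have hDne1 : ∀ δ ∈ D, δ ≠ 1 := fun δ hδ => Finset.ne_of_mem_erase hδ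
    set Nfun : G → Subgroup G := fun δ => if h : δ ≠ 1 then (hG δ h).choose else ⊤ with hNfun
    have hNfi : ∀ δ ∈ D, (Nfun δ).FiniteIndex := by
      intro δ hδ
      have : Nfun δ = (hG δ (hDne1 δ hδ)).choose := by
        rw [hNfun]; exact dif_pos (hDne1 δ hδ)
      rw [this]
      exact (hG δ (hDne1 δ hδ)).choose_spec.2.1
    have hNavoid : ∀ δ ∈ D, δ ∉ Nfun δ := by
      intro δ hδ
      have : Nfun δ = (hG δ (hDne1 δ hδ)).choose := by
        rw [hNfun]; exact dif_pos (hDne1 δ hδ)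
      rw [this]
      exact (hG δ (hDne1 δ hδ)).choose_spec.2.2
    set N : Subgroup G := ⨅ δ ∈ D, Nfun δ with hN
    have hNfi' : N.FiniteIndex := Subgroup.finiteIndex_iInf' Nfun hNfi
    have hsep : ∀ i, ∀ g ∈ (y i).support, ∀ g' ∈ (y i).support, g * g'⁻¹ ∈ N → g = g' := by
      intro i g hg g' hg' hmem
      by_contra hne
      have hδ1 : g * g'⁻¹ ≠ 1 := fun h => hne (by rwa [mul_inv_eq_one] at h)
      have hδD : g * g'⁻¹ ∈ D := by
        rw [hD]
        refine Finset.mem_erase.mpr ⟨hδ1, Finset.mem_image.mpr ⟨(g, g'), ?_, rfl⟩⟩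
        refine Finset.mem_product.mpr ⟨?_, ?_⟩
        · exact Finset.mem_biUnion.mpr ⟨i, Finset.mem_univ i, hg⟩
        · exact Finset.mem_biUnion.mpr ⟨i, Finset.mem_univ i, hg'⟩
      have hle : N ≤ Nfun (g * g'⁻¹) := hN ▸ iInf₂_le (g * g'⁻¹) hδD
      exact hNavoid _ hδD (hle hmem)
    -- cosets
    haveI := hNfi'
    haveI : Finite (G ⧸ N) := N.finite_quotient_of_finiteIndex
    set Q := Quotient (QuotientGroup.rightRel N) with hQ
    haveI : Finite Q :=
      Finite.of_equiv _ (QuotientGroup.quotientRightRelEquivQuotientLeftRel N).symm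
    letI : Fintype Q := Fintype.ofFinite Q
    have hcard : Fintype.card Q = N.index := by
      rw [← Nat.card_eq_fintype_card,
        Nat.card_congr (QuotientGroup.quotientRightRelEquivQuotientLeftRel N)]
      rfl
    set π : G → Q := Quotient.mk (QuotientGroup.rightRel N) with hπ
    have hrel : ∀ {a b : G}, π a = π b → b * a⁻¹ ∈ N := by
      intro a b hab
      exact (QuotientGroup.rightRel_apply).mp (Quotient.exact hab)
    set σ' : Fin r → Q → G := fun i q =>
      if h : ∃ g, g ∈ (y i).support ∧ π g = q then h.choose else q.out with hσ'
    have hπσ' : ∀ i q, π (σ' i q) = q := by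
      intro i q
      by_cases h : ∃ g, g ∈ (y i).support ∧ π g = q
      · have : σ' i q = h.choose := by rw [hσ']; exact dif_pos h
        rw [this]
        exact h.choose_spec.2
      · have : σ' i q = q.out := by rw [hσ']; exact dif_neg h
        rw [this]
        exact Quotient.out_eq q
    have hσ'mem : ∀ i q, (∃ g, g ∈ (y i).support ∧ π g = q) → σ' i q ∈ (y i).support := by
      intro i q h
      have : σ' i q = h.choose := by rw [hσ']; exact dif_pos h
      rw [this]
      exact h.choose_spec.1
    have hinjsup : ∀ i, ∀ g ∈ (y i).support, ∀ g' ∈ (y i).support, π g = π g' → g = g' := by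
      intro i g hg g' hg' h
      exact (hsep i g' hg' g hg (hrel h)).symm
    have hσ'eq : ∀ i, ∀ g ∈ (y i).support, σ' i (π g) = g := by
      intro i g hg
      have hex : ∃ g', g' ∈ (y i).support ∧ π g' = π g := ⟨g, hg, rfl⟩
      exact hinjsup i _ (hσ'mem i (π g) hex) g hg (hπσ' i (π g))
    -- module structures
    set ρ : MonoidAlgebra ℤ ↥N →+* MonoidAlgebra ℤ G :=
      MonoidAlgebra.mapDomainRingHom ℤ N.subtype with hρ
    letI : Module (MonoidAlgebra ℤ ↥N) M :=
      Module.compHom M (MonoidAlgebra.mapDomainRingHom ℤ N.subtype)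
    letI : Module (MonoidAlgebra ℤ ↥N) (Fin r → MonoidAlgebra ℤ G) :=
      Module.compHom (Fin r → MonoidAlgebra ℤ G) ρ
    set b' : Fin r × Q → (Fin r → MonoidAlgebra ℤ G) :=
      fun p => Pi.single p.1 (MonoidAlgebra.single (σ' p.1 p.2) 1) with hb'
    set cc : Fin r × Q → ℤ := fun p => y p.1 (σ' p.1 p.2) with hcc
    -- y is the integer combination of b' with coefficients cc
    have hyrep : y = ∑ p : Fin r × Q, cc p • b' p := by
      funext j
      rw [Finset.sum_apply]
      have hterm : ∀ p : Fin r × Q, (cc p • b' p) j =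
          if p.1 = j then MonoidAlgebra.single (σ' p.1 p.2) (cc p) else 0 := by
        rintro ⟨i, q⟩
        show cc (i, q) • (Pi.single i (MonoidAlgebra.single (σ' i q) 1) : Fin r → _) j = _
        by_cases hij : i = j
        · subst hij
          rw [if_pos rfl, Pi.single_eq_same, MonoidAlgebra.smul_single, smul_eq_mul, mul_one]
        · rw [if_neg hij, Pi.single_eq_of_ne (fun h => hij h.symm) _, smul_zero]
      rw [Finset.sum_congr rfl fun p _ => hterm p]
      have hQsum : (∑ q : Q, MonoidAlgebra.single (σ' j q) (cc (j, q))) = y j := by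
        have himage : ∀ q ∈ (Finset.univ : Finset Q), q ∉ (y j).support.image π →
            MonoidAlgebra.single (σ' j q) (cc (j, q)) = 0 := by
          intro q _ hq
          have h0 : y j (σ' j q) = 0 := by
            by_contra h
            exact hq (Finset.mem_image.mpr ⟨σ' j q, Finsupp.mem_support_iff.mpr h, hπσ' j q⟩)
          have h2 : cc (j, q) = y j (σ' j q) := rfl
          rw [h2, h0]
          exact MonoidAlgebra.single_zero _
        calc ∑ q : Q, MonoidAlgebra.single (σ' j q) (cc (j, q))
            = ∑ q ∈ (y j).support.image π, MonoidAlgebra.single (σ' j q) (cc (j, q)) :=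
              (Finset.sum_subset (Finset.subset_univ _) himage).symm
          _ = ∑ g ∈ (y j).support, MonoidAlgebra.single (σ' j (π g)) (cc (j, π g)) :=
              Finset.sum_image (hinjsup j)
          _ = ∑ g ∈ (y j).support, MonoidAlgebra.single g (y j g) := by
              refine Finset.sum_congr rfl fun g hg => ?_
              have h1 : σ' j (π g) = g := hσ'eq j g hg
              have h2 : cc (j, π g) = y j (σ' j (π g)) := rfl
              rw [h2, h1]
          _ = y j := MonoidAlgebra.sum_coeff_single (y j)
      rw [Fintype.sum_prod_type]
      rw [Finset.sum_eq_single j ?hz1 ?hz2]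
      case hz1 => intro i _ hij; exact Finset.sum_eq_zero fun q _ => if_neg hij
      case hz2 => intro h; exact absurd (Finset.mem_univ j) h
      have hredq : ∀ q : Q, (if j = j then MonoidAlgebra.single (σ' j q) (cc (j, q)) else 0)
          = MonoidAlgebra.single (σ' j q) (cc (j, q)) := fun q => if_pos rfl
      rw [Finset.sum_congr rfl fun q _ => hredq q]
      exact hQsum.symm
    -- the family b' spans over the subgroup algebra
    have hspan : Submodule.span (MonoidAlgebra ℤ ↥N) (Set.range b') = ⊤ := by
      rw [eq_top_iff]
      rintro w -
      have key : ∀ (i : Fin r) (g : G) (t : ℤ),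
          Pi.single i (MonoidAlgebra.single g t) ∈
            Submodule.span (MonoidAlgebra ℤ ↥N) (Set.range b') := by
        intro i g t
        have hmem : g * (σ' i (π g))⁻¹ ∈ N := hrel (hπσ' i (π g))
        have hsmul : (MonoidAlgebra.single (⟨g * (σ' i (π g))⁻¹, hmem⟩ : ↥N) t
              : MonoidAlgebra ℤ ↥N) • b' (i, π g)
            = Pi.single i (MonoidAlgebra.single g t) := by
          funext j
          show ρ (MonoidAlgebra.single _ t) * (b' (i, π g) j) = _
          have hρs : ρ (MonoidAlgebra.single (⟨g * (σ' i (π g))⁻¹, hmem⟩ : ↥N) t)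
              = MonoidAlgebra.single (g * (σ' i (π g))⁻¹) t := by
            show MonoidAlgebra.mapDomain _ _ = _
            rw [MonoidAlgebra.mapDomain_single]
            rfl
          by_cases hij : j = i
          · subst hij
            have hb1 : b' (j, π g) j = MonoidAlgebra.single (σ' j (π g)) 1 := by
              rw [hb']
              exact Pi.single_eq_same j _
            rw [hb1, Pi.single_eq_same, hρs, MonoidAlgebra.single_mul_single, mul_one,
              inv_mul_cancel_right]
          · have hb2 : b' (i, π g) j = 0 := by
              rw [hb']
              exact Pi.single_eq_of_ne hij _
            rw [hb2, Pi.single_eq_of_ne hij, mul_zero]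
        rw [← hsmul]
        exact Submodule.smul_mem _ _ (Submodule.subset_span (Set.mem_range_self _))
      have hw : w = ∑ i, Pi.single i (w i) := by
        funext j
        rw [Finset.sum_apply]
        exact (Fintype.sum_pi_single j w).symm
      rw [hw]
      refine Submodule.sum_mem _ fun i _ => ?_
      have hdec : Pi.single i (w i) =
          ∑ g ∈ (w i).support,
            (Pi.single i (MonoidAlgebra.single g (w i g)) : Fin r → MonoidAlgebra ℤ G) := by
        funext j
        rw [Finset.sum_apply]
        by_cases hij : j = i
        · subst hij
          rw [Pi.single_eq_same]
          simp only [Pi.single_eq_same]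
          exact (MonoidAlgebra.sum_coeff_single (w j)).symm
        · rw [Pi.single_eq_of_ne hij]
          simp only [Pi.single_eq_of_ne hij]
          exact Finset.sum_const_zero.symm
      rw [hdec]
      exact Submodule.sum_mem _ fun g _ => key i g (w i g)
    -- apply lemC
    have hcc0 : cc ≠ 0 := by
      have hex : ∃ i, y i ≠ 0 := by
        by_contra h
        push_neg at h
        exact hy0 (funext h)
      obtain ⟨i, hi⟩ := hex
      obtain ⟨g, hg⟩ : ∃ g, g ∈ (y i).support := by
        rcases Finset.eq_empty_or_nonempty (y i).support with h | h
        · exact absurd (MonoidAlgebra.coeff_eq_zero.mp (Finsupp.support_eq_empty.mp h)) hi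
        · exact h
      intro h0
      have h1 : cc (i, π g) = 0 := congrFun h0 (i, π g)
      have h2 : cc (i, π g) = y i (σ' i (π g)) := rfl
      rw [h2, hσ'eq i g hg] at h1
      exact Finsupp.mem_support_iff.mp hg h1
    have hprim : ∀ k t : ℤ, (∀ p : Fin r × Q, k ∣ t * cc p) → k ∣ t := by
      intro k t h
      refine hcontent k t fun i g => ?_
      by_cases hg : g ∈ (y i).support
      · have h1 := h (i, π g)
        have h2 : cc (i, π g) = y i (σ' i (π g)) := rfl
        rwa [h2, hσ'eq i g hg] at h1
      · rw [Finsupp.notMem_support_iff.mp hg, mul_zero]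
        exact dvd_zero k
    obtain ⟨v, hv⟩ := lemC hcc0 hprim
    -- the generators
    set θ : (Fin r × Q → ℤ) →ₗ[ℤ] M :=
      f.toAddMonoidHom.toIntLinearMap.comp (piCombo (R := ℤ) b') with hθ
    have hθapp : ∀ u : Fin r × Q → ℤ, θ u = f (∑ p, u p • b' p) := fun u => rfl
    have hθc : θ cc = 0 := by
      rw [hθapp, ← hyrep]
      exact hfy
    have hθe : ∀ p : Fin r × Q, θ (Pi.single p 1) = f (b' p) := by
      intro p
      rw [hθapp]
      congr 1
      exact piCombo_single (R := ℤ) b' p |>.symm ▸ rfl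
    set wgen : Fin (Fintype.card (Fin r × Q) - 1) → M := fun t => θ (v t) with hwgen
    have hθspan : ∀ u ∈ Submodule.span ℤ (insert cc (Set.range v)),
        θ u ∈ Submodule.span (MonoidAlgebra ℤ ↥N) (Set.range wgen) := by
      intro u hu
      induction hu using Submodule.span_induction with
      | mem z hz =>
          rcases Set.mem_insert_iff.mp hz with h | h
          · rw [h, hθc]
            exact Submodule.zero_mem _
          · obtain ⟨t, rfl⟩ := h
            exact Submodule.subset_span ⟨t, rfl⟩
      | zero =>
          rw [map_zero]
          exact Submodule.zero_mem _
      | add a b _ _ ha hb =>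
          rw [map_add]
          exact Submodule.add_mem _ ha hb
      | smul k u _ hu =>
          rw [map_smul]
          exact zsmul_mem hu k
    have hwspan : Submodule.span (MonoidAlgebra ℤ ↥N) (Set.range wgen) = ⊤ := by
      rw [eq_top_iff]
      rintro mm -
      obtain ⟨xx, rfl⟩ := hf mm
      have hxx : xx ∈ Submodule.span (MonoidAlgebra ℤ ↥N) (Set.range b') :=
        hspan ▸ Submodule.mem_top
      induction hxx using Submodule.span_induction with
      | mem z hz =>
          obtain ⟨p, rfl⟩ := hz
          have he : (Pi.single p 1 : Fin r × Q → ℤ) ∈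
              Submodule.span ℤ (insert cc (Set.range v)) := hv ▸ Submodule.mem_top
          have := hθspan _ he
          rwa [hθe p] at this
      | zero =>
          rw [map_zero]
          exact Submodule.zero_mem _
      | add a b _ _ ha hb =>
          rw [map_add]
          exact Submodule.add_mem _ ha hb
      | smul c z _ hz =>
          have hcz : f (c • z) = c • f z := f.map_smul (ρ c) z
          rw [hcz]
          exact Submodule.smul_mem _ c hz
    have hle : minNumGen (MonoidAlgebra ℤ ↥N) M ≤ Fintype.card (Fin r × Q) - 1 :=
      minNumGen_le_of_span hwspan
    have hcardm : Fintype.card (Fin r × Q) = r * N.index := by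
      simp [hcard]
    have heq : minNumGen (MonoidAlgebra ℤ ↥N) M = r * N.index := hall N hNfi'
    have hpos : 1 ≤ r * N.index :=
      Nat.one_le_iff_ne_zero.mpr (Nat.mul_ne_zero hr hNfi'.index_ne_zero)
    rw [hcardm] at hle
    omega

end Forward
end

section
/- Let G be a residually finite group, let M be a ℤG-module that is torsion-free as an abelian group, and let f : (ℤG)^r → M be a surjective homomorphism of ℤG-modules whose kernel is nonzero. Then there exists a subgroup H of finite index in G such that the minimal number of generators of M as a ℤH-module is strictly less than r·[G:H]. -/
open Finset in
lemma aux_sep {G : Type*} [Group G] (hG : ResiduallyFinite G) (S : Finset G) :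
    ∃ H : Subgroup G, H.FiniteIndex ∧ ∀ g ∈ S, ∀ g' ∈ S, g ≠ g' → g * g'⁻¹ ∉ H := by
  classical
  have hpair : ∀ p : G × G, ∃ N : Subgroup G,
      (p.1 ≠ p.2 → (N.FiniteIndex ∧ p.1 * p.2⁻¹ ∉ N)) := by
    intro p
    by_cases h : p.1 = p.2
    · exact ⟨⊤, fun hc => absurd h hc⟩
    · have h1 : p.1 * p.2⁻¹ ≠ 1 := by
        intro hc
        exact h (by rwa [mul_inv_eq_one] at hc)
      obtain ⟨N, _, hfi, hmem⟩ := hG _ h1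
      exact ⟨N, fun _ => ⟨hfi, hmem⟩⟩
  choose N hN using hpair
  set T : Finset (G × G) := (S ×ˢ S).filter (fun p => p.1 ≠ p.2) with hT
  refine ⟨⨅ p ∈ T, N p,
    Subgroup.finiteIndex_iInf' _ (fun p hp => (hN p (mem_filter.mp hp).2).1), ?_⟩
  intro g hg g' hg' hne hmem
  simp only [Subgroup.mem_iInf] at hmem
  have hT' : (g, g') ∈ T := mem_filter.mpr ⟨mem_product.mpr ⟨hg, hg'⟩, hne⟩
  exact (hN (g, g') hne).2 (hmem _ hT')

lemma aux_drop {R M : Type*} [Ring R] [AddCommGroup M] [Module R M]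
    (htf : ∀ (k : ℤ) (x : M), k • x = 0 → k = 0 ∨ x = 0)
    {ι : Type*} [Fintype ι] :
    ∀ (Nval : ℕ) (n : ι → ℤ) (y : ι → M), (∑ j, (n j).natAbs) = Nval → n ≠ 0 →
      Submodule.span R (Set.range y) = ⊤ → (∑ j, n j • y j) = 0 →
      ∃ z : Fin (Fintype.card ι - 1) → M, Submodule.span R (Set.range z) = ⊤ := by
  classical
  intro Nval
  induction Nval using Nat.strong_induction_on with
  | _ Nval ih =>
  intro n y hsum hn hy hrel
  by_cases hex : ∃ a b, a ≠ b ∧ n a ≠ 0 ∧ n b ≠ 0 ∧ (n b).natAbs ≤ (n a).natAbs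
  · obtain ⟨a, b, hab, ha, hb, hle⟩ := hex
    set q : ℤ := n a / n b with hq
    set n' : ι → ℤ := Function.update n a (n a % n b) with hn'def
    set y' : ι → M := Function.update y b (y b + q • y a) with hy'def
    have hy'a : y' a = y a := Function.update_of_ne hab _ _
    have hy'b : y' b = y b + q • y a := Function.update_self _ _ _
    have hn'a : n' a = n a % n b := Function.update_self _ _ _
    have hn'b : n' b = n b := Function.update_of_ne (Ne.symm hab) _ _
    have hdiff : ∑ j, (n' j • y' j - n j • y j) = 0 := by
      rw [Finset.sum_eq_add_of_mem a b (Finset.mem_univ a) (Finset.mem_univ b) hab ?_]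
      · rw [hy'a, hn'a, hy'b, hn'b]
        have hkey : n a % n b - n a = -(n b * q) := by
          have := Int.mul_ediv_add_emod (n a) (n b)
          rw [hq]; linarith
        rw [← sub_smul, hkey, smul_add, add_sub_cancel_left, smul_smul, neg_smul]
        abel
      · intro c _ ⟨hca, hcb⟩
        rw [hn'def, hy'def, Function.update_of_ne hca, Function.update_of_ne hcb, sub_self]
    have hrel' : ∑ j, n' j • y' j = 0 := by
      rw [Finset.sum_sub_distrib, hrel, sub_zero] at hdiff
      exact hdiff
    have hn'ne : n' ≠ 0 := by
      intro hc
      exact hb (by rw [← hn'b, hc]; rfl)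
    have hspan' : Submodule.span R (Set.range y') = ⊤ := by
      rw [eq_top_iff, ← hy]
      refine Submodule.span_le.mpr ?_
      rintro x ⟨j, rfl⟩
      by_cases hjb : j = b
      · subst hjb
        have : y j = y' j - q • y' a := by rw [hy'a, hy'b]; abel
        rw [this]
        exact sub_mem (Submodule.subset_span ⟨j, rfl⟩)
          (zsmul_mem (Submodule.subset_span (Set.mem_range_self a)) q)
      · have : y j = y' j := (Function.update_of_ne hjb _ _).symm
        rw [this]
        exact Submodule.subset_span ⟨j, rfl⟩
    have hstep : (n' a).natAbs < (n a).natAbs := by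
      rw [hn'a]
      have h1 := Int.emod_nonneg (n a) hb
      have h2 := Int.emod_lt (n a) hb
      omega
    have hle' : ∀ j ∈ Finset.univ, (n' j).natAbs ≤ (n j).natAbs := by
      intro j _
      by_cases hja : j = a
      · subst hja; exact le_of_lt hstep
      · rw [hn'def, Function.update_of_ne hja]
    have hlt : ∑ j, (n' j).natAbs < Nval := by
      rw [← hsum]
      exact Finset.sum_lt_sum hle' ⟨a, Finset.mem_univ a, hstep⟩
    exact ih _ hlt n' y' rfl hn'ne hspan' hrel'
  · obtain ⟨a, ha⟩ := Function.ne_iff.mp hn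
    have hall : ∀ j, j ≠ a → n j = 0 := by
      intro j hj
      by_contra hnj
      rcases le_total ((n j).natAbs) ((n a).natAbs) with h | h
      · exact hex ⟨a, j, Ne.symm hj, ha, hnj, h⟩
      · exact hex ⟨j, a, hj, hnj, ha, h⟩
    have hya : y a = 0 := by
      have hs : ∑ j, n j • y j = n a • y a :=
        Finset.sum_eq_single a (fun b _ hb => by rw [hall b hb, zero_smul])
          (fun h => absurd (Finset.mem_univ a) h)
      rcases htf (n a) (y a) (by rw [← hs]; exact hrel) with h | h
      · exact absurd h ha
      · exact h
    have hcard : Fintype.card {j : ι // j ≠ a} = Fintype.card ι - 1 := by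
      have h1 := Fintype.card_subtype_compl (fun j : ι => j = a)
      have h2 : Fintype.card {j : ι // j = a} = 1 := Fintype.card_subtype_eq a
      simp only [h2] at h1
      exact h1
    let e : Fin (Fintype.card ι - 1) ≃ {j : ι // j ≠ a} :=
      (Fintype.equivFinOfCardEq hcard).symm
    refine ⟨fun i => y (e i), ?_⟩
    rw [eq_top_iff, ← hy]
    refine Submodule.span_le.mpr ?_
    rintro x ⟨j, rfl⟩
    by_cases hja : j = a
    · subst hja
      rw [hya]
      exact zero_mem _
    · exact Submodule.subset_span ⟨e.symm ⟨j, hja⟩, by simp⟩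

lemma aux_min {R M : Type*} [Ring R] [AddCommGroup M] [Module R M] {m : ℕ}
    (z : Fin m → M) (hz : Submodule.span R (Set.range z) = ⊤) :
    minNumGen R M ≤ m := by
  let φ : (Fin m → R) →ₗ[R] M :=
    { toFun := fun c => ∑ i, c i • z i
      map_add' := fun c d => by simp [add_smul, Finset.sum_add_distrib]
      map_smul' := fun a c => by simp [mul_smul, Finset.smul_sum] }
  refine Nat.sInf_le ⟨φ, fun x => ?_⟩
  have hx : x ∈ Submodule.span R (Set.range z) := hz ▸ Submodule.mem_top
  obtain ⟨c, hc⟩ := (Submodule.mem_span_range_iff_exists_fun R).mp hx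
  exact ⟨c, hc⟩

theorem stmt_2 {G : Type*} [Group G] (hG : ResiduallyFinite G)
    (M : Type*) [AddCommGroup M] [Module (MonoidAlgebra ℤ G) M]
    (htf : ∀ (k : ℤ) (x : M), k • x = 0 → k = 0 ∨ x = 0)
    (r : ℕ) (f : (Fin r → MonoidAlgebra ℤ G) →ₗ[MonoidAlgebra ℤ G] M)
    (hf : Function.Surjective f) (hker : LinearMap.ker f ≠ ⊥) :
    ∃ H : Subgroup G, H.FiniteIndex ∧
      (letI : Module (MonoidAlgebra ℤ ↥H) M :=
        Module.compHom M (MonoidAlgebra.mapDomainRingHom ℤ H.subtype)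
       minNumGen (MonoidAlgebra ℤ ↥H) M < r * H.index) := by
  classical
  obtain ⟨k, hkmem, hk0⟩ := (Submodule.ne_bot_iff _).mp hker
  have hfk : f k = 0 := hkmem
  have hr : r ≠ 0 := by
    intro h
    subst h
    exact hk0 (funext fun i => i.elim0)
  set S : Finset G := Finset.univ.biUnion (fun i => (k i).coeff.support) with hSdef
  have hSmem : ∀ (i : Fin r), ∀ g ∈ (k i).coeff.support, g ∈ S := fun i g hg =>
    Finset.mem_biUnion.mpr ⟨i, Finset.mem_univ i, hg⟩
  obtain ⟨H, hHfi, hsep⟩ := aux_sep hG S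
  haveI := hHfi
  refine ⟨H, hHfi, ?_⟩
  letI : Module (MonoidAlgebra ℤ ↥H) M :=
    Module.compHom M (MonoidAlgebra.mapDomainRingHom ℤ H.subtype)
  letI : Fintype (G ⧸ H) := Fintype.ofFinite _
  have huniq : ∀ g ∈ S, ∀ g' ∈ S,
      (QuotientGroup.mk g⁻¹ : G ⧸ H) = QuotientGroup.mk g'⁻¹ → g = g' := by
    intro g hg g' hg' h
    by_contra hne
    refine hsep g hg g' hg' hne ?_
    have := QuotientGroup.eq.mp h
    rwa [inv_inv] at this
  have hchoice : ∀ q : G ⧸ H, ∃ g : G, (QuotientGroup.mk g⁻¹ : G ⧸ H) = q ∧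
      ∀ s ∈ S, (QuotientGroup.mk s⁻¹ : G ⧸ H) = q → s = g := by
    intro q
    by_cases h : ∃ s ∈ S, (QuotientGroup.mk s⁻¹ : G ⧸ H) = q
    · obtain ⟨s0, hs0S, hs0q⟩ := h
      exact ⟨s0, hs0q, fun s hs hsq => huniq s hs s0 hs0S (hsq.trans hs0q.symm)⟩
    · refine ⟨(Quotient.out q)⁻¹, ?_, fun s hs hsq => absurd ⟨s, hs, hsq⟩ h⟩
      rw [inv_inv]
      exact Quotient.out_eq q
  choose t ht1 ht2 using hchoice
  have hP2 : ∀ g ∈ S, t (QuotientGroup.mk g⁻¹) = g := fun g hg =>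
    (ht2 _ g hg rfl).symm
  have hP1 : ∀ g : G, g * (t (QuotientGroup.mk g⁻¹))⁻¹ ∈ H := by
    intro g
    have h := QuotientGroup.eq.mp (ht1 (QuotientGroup.mk g⁻¹))
    rw [inv_inv] at h
    have h2 := H.inv_mem h
    rwa [mul_inv_rev, inv_inv] at h2
  set F : (i : Fin r) → MonoidAlgebra ℤ G →ₗ[MonoidAlgebra ℤ G] M :=
    fun i => f ∘ₗ LinearMap.single (MonoidAlgebra ℤ G) (fun _ : Fin r => MonoidAlgebra ℤ G) i
    with hFdef
  have hfv : ∀ v : Fin r → MonoidAlgebra ℤ G, f v = ∑ i, F i (v i) := by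
    intro v
    conv_lhs => rw [← Finset.univ_sum_single v]
    rw [map_sum]
    refine Finset.sum_congr rfl fun i _ => ?_
    simp [hFdef]
  set y : Fin r × (G ⧸ H) → M := fun p => F p.1 (MonoidAlgebra.single (t p.2) 1) with hydef
  have hsmulH : ∀ (h : G) (hh : h ∈ H) (x : M),
      (MonoidAlgebra.single h 1 : MonoidAlgebra ℤ G) • x =
      (MonoidAlgebra.single (⟨h, hh⟩ : ↥H) (1 : ℤ) : MonoidAlgebra ℤ ↥H) • x := by
    intro h hh x
    have h1 : (MonoidAlgebra.mapDomainRingHom ℤ H.subtype)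
        (MonoidAlgebra.single (⟨h, hh⟩ : ↥H) (1 : ℤ)) = MonoidAlgebra.single h 1 := by
      simp [MonoidAlgebra.mapDomainRingHom]
    calc (MonoidAlgebra.single h 1 : MonoidAlgebra ℤ G) • x
        = (MonoidAlgebra.mapDomainRingHom ℤ H.subtype)
            (MonoidAlgebra.single (⟨h, hh⟩ : ↥H) (1 : ℤ)) • x := by rw [h1]
      _ = (MonoidAlgebra.single (⟨h, hh⟩ : ↥H) (1 : ℤ) : MonoidAlgebra ℤ ↥H) • x := rfl
  have hsingle_mem : ∀ (i : Fin r) (g : G),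
      F i (MonoidAlgebra.single g 1) ∈
        Submodule.span (MonoidAlgebra ℤ ↥H) (Set.range y) := by
    intro i g
    have hdecomp : (MonoidAlgebra.single g (1 : ℤ) : MonoidAlgebra ℤ G) =
        MonoidAlgebra.single (g * (t (QuotientGroup.mk g⁻¹))⁻¹) 1 *
          MonoidAlgebra.single (t (QuotientGroup.mk g⁻¹)) 1 := by
      rw [MonoidAlgebra.single_mul_single, one_mul, inv_mul_cancel_right]
    rw [hdecomp, ← smul_eq_mul, map_smul, hsmulH _ (hP1 g)]
    exact Submodule.smul_mem _ _
      (Submodule.subset_span ⟨(i, QuotientGroup.mk g⁻¹), rfl⟩)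
  have hmemN : ∀ (i : Fin r) (w : MonoidAlgebra ℤ G),
      F i w ∈ Submodule.span (MonoidAlgebra ℤ ↥H) (Set.range y) := by
    intro i w
    induction w using MonoidAlgebra.induction_on with
    | of g => exact hsingle_mem i g
    | add u v hu hv => rw [map_add]; exact add_mem hu hv
    | smul c w hw =>
      rw [map_zsmul]
      exact zsmul_mem hw c
  have hspan : Submodule.span (MonoidAlgebra ℤ ↥H) (Set.range y) = ⊤ := by
    rw [eq_top_iff]
    rintro x -
    obtain ⟨v, rfl⟩ := hf x
    rw [hfv]
    exact Submodule.sum_mem _ fun i _ => hmemN i (v i)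
  set n : Fin r × (G ⧸ H) → ℤ := fun p =>
    ∑ g ∈ (k p.1).coeff.support.filter
        (fun g => (QuotientGroup.mk g⁻¹ : G ⧸ H) = p.2), (k p.1).coeff g with hndef
  have hrel : ∑ p : Fin r × (G ⧸ H), n p • y p = 0 := by
    rw [Fintype.sum_prod_type]
    have hcalc : ∀ i : Fin r, (∑ q : G ⧸ H, n (i, q) • y (i, q)) = F i (k i) := by
      intro i
      have h1 : ∀ q : G ⧸ H, n (i, q) • y (i, q) =
          ∑ g ∈ (k i).coeff.support.filter (fun g => (QuotientGroup.mk g⁻¹ : G ⧸ H) = q),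
            (k i).coeff g • F i (MonoidAlgebra.single g 1) := by
        intro q
        simp only [hndef, hydef]
        rw [Finset.sum_smul]
        refine Finset.sum_congr rfl fun g hg => ?_
        obtain ⟨hgs, hgq⟩ := Finset.mem_filter.mp hg
        congr 2
        rw [← hgq, hP2 g (hSmem i g hgs)]
      rw [Finset.sum_congr rfl fun q _ => h1 q]
      rw [Finset.sum_fiberwise_of_maps_to (fun g _ => Finset.mem_univ _)]
      calc ∑ g ∈ (k i).coeff.support, (k i).coeff g • F i (MonoidAlgebra.single g 1)
          = ∑ g ∈ (k i).coeff.support, F i ((k i).coeff g • MonoidAlgebra.single g 1) :=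
            Finset.sum_congr rfl fun g _ => (map_zsmul (F i) _ _).symm
        _ = F i (∑ g ∈ (k i).coeff.support, (k i).coeff g • MonoidAlgebra.single g 1) :=
            (map_sum _ _ _).symm
        _ = F i (k i) := by
            congr 1
            refine (Finset.sum_congr rfl fun g _ => ?_).trans (MonoidAlgebra.sum_coeff_single (k i))
            rw [MonoidAlgebra.smul_single, smul_eq_mul, mul_one]
    rw [Finset.sum_congr rfl fun i _ => hcalc i, ← hfv, hfk]
  have hnne : n ≠ 0 := by
    obtain ⟨i, hi⟩ := Function.ne_iff.mp hk0
    have hne : k i ≠ 0 := by simpa using hi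
    obtain ⟨g, hg⟩ := Finsupp.support_nonempty_iff.mpr (mt MonoidAlgebra.coeff_eq_zero.mp hne)
    refine Function.ne_iff.mpr ⟨(i, QuotientGroup.mk g⁻¹), ?_⟩
    have hval : n (i, QuotientGroup.mk g⁻¹) = (k i).coeff g := by
      simp only [hndef]
      refine Finset.sum_eq_single g (fun g' hg' hne' => ?_) (fun hng => ?_)
      · obtain ⟨hg's, hg'q⟩ := Finset.mem_filter.mp hg'
        exact absurd (huniq g' (hSmem i g' hg's) g (hSmem i g hg) hg'q) hne'
      · refine absurd (Finset.mem_filter.mpr ⟨hg, ?_⟩) hng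
        rfl
    have : n (i, QuotientGroup.mk g⁻¹) ≠ 0 := by
      rw [hval]
      exact Finsupp.mem_support_iff.mp hg
    simpa using this
  have hdrop := aux_drop (R := MonoidAlgebra ℤ ↥H) htf (∑ j, (n j).natAbs) n y rfl
    hnne hspan hrel
  have hcard : Fintype.card (Fin r × (G ⧸ H)) = r * H.index := by
    rw [Fintype.card_prod, Fintype.card_fin, Subgroup.index, Nat.card_eq_fintype_card]
  rw [hcard] at hdrop
  obtain ⟨z, hz⟩ := hdrop
  have hle := aux_min z hz
  have hpos : 0 < r * H.index := Nat.pos_of_ne_zero (Nat.mul_ne_zero hr hHfi.index_ne_zero)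
  omega
end

section
/- Let G be a group with a finite presentation having e₁ generators and e₂ relators (G ≅ F/N with F free of rank e₁ and N the normal closure of a set of e₂ elements). Then there exists an exact sequence of ℤG-modules (ℤG)^{e₂} → (ℤG)^{e₁} → ℤG → ℤ → 0, where the map ℤG → ℤ is the augmentation map, exactness holding at (ℤG)^{e₁}, at ℤG, and at ℤ (i.e. the augmentation is surjective). -/
/-- `G` has a finite presentation with `n` generators and `m` relators:
`G ≅ F/N` where `F` is free of rank `n` and `N` is the normal closure of a set of
`m` elements of `F` (given as the range of a family indexed by `Fin m`). -/
def HasPresentation (G : Type*) [Group G] (n m : ℕ) : Prop :=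
  ∃ rel : Fin m → FreeGroup (Fin n),
    Nonempty (G ≃* (FreeGroup (Fin n) ⧸ Subgroup.normalClosure (Set.range rel)))

/-- The augmentation ring homomorphism `ℤG → ℤ`, sending every group element to `1`. -/
noncomputable def augRingHom (G : Type*) [Group G] : MonoidAlgebra ℤ G →+* ℤ :=
  ((MonoidAlgebra.lift ℤ ℤ G) 1).toRingHom

/-- `ℤ` regarded as the trivial `ℤG`-module (a type synonym for `ℤ`). -/
def TrivialZ (G : Type*) [Group G] : Type := ℤ

instance (G : Type*) [Group G] : AddCommGroup (TrivialZ G) :=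
  inferInstanceAs (AddCommGroup ℤ)

/-- The `ℤG`-module structure on `TrivialZ G`: every group element acts as the
identity, i.e. the action is through the augmentation `ℤG → ℤ`. -/
noncomputable instance (G : Type*) [Group G] : Module (MonoidAlgebra ℤ G) (TrivialZ G) :=
  Module.compHom ℤ (augRingHom G)

/-- The augmentation map `ℤG → ℤ` as a map of `ℤG`-modules, `ℤ` carrying the
trivial `G`-action. -/
noncomputable def augLinearMap (G : Type*) [Group G] :
    MonoidAlgebra ℤ G →ₗ[MonoidAlgebra ℤ G] TrivialZ G where
  toFun x := (augRingHom G x : ℤ)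
  map_add' x y := map_add (augRingHom G) x y
  map_smul' a x := by
    change augRingHom G (a * x) = augRingHom G a * augRingHom G x
    exact map_mul _ a x


section FoxAux

variable {n : ℕ} {G : Type*} [Group G]

/-- The action of `g : G` on `(ℤG)ⁿ` as an additive automorphism. -/
noncomputable def gAut (g : G) :
    (Fin n → MonoidAlgebra ℤ G) ≃+ (Fin n → MonoidAlgebra ℤ G) where
  toFun v := MonoidAlgebra.of ℤ G g • v
  invFun v := MonoidAlgebra.of ℤ G g⁻¹ • v
  left_inv v := by
    show MonoidAlgebra.of ℤ G g⁻¹ • MonoidAlgebra.of ℤ G g • v = v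
    rw [smul_smul, ← map_mul, inv_mul_cancel, map_one, one_smul]
  right_inv v := by
    show MonoidAlgebra.of ℤ G g • MonoidAlgebra.of ℤ G g⁻¹ • v = v
    rw [smul_smul, ← map_mul, mul_inv_cancel, map_one, one_smul]
  map_add' x y := smul_add _ x y

/-- `G` acting on `Multiplicative (ℤG)ⁿ` by multiplicative automorphisms. -/
noncomputable def phiAct :
    G →* MulAut (Multiplicative (Fin n → MonoidAlgebra ℤ G)) where
  toFun g := AddEquiv.toMultiplicative (gAut g)
  map_one' := by
    refine MulEquiv.ext fun v => ?_
    show Multiplicative.ofAdd (MonoidAlgebra.of ℤ G 1 • Multiplicative.toAdd v) = v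
    rw [map_one, one_smul]
    rfl
  map_mul' g h := by
    refine MulEquiv.ext fun v => ?_
    show Multiplicative.ofAdd (MonoidAlgebra.of ℤ G (g * h) • Multiplicative.toAdd v) = _
    show _ = Multiplicative.ofAdd (MonoidAlgebra.of ℤ G g •
      Multiplicative.toAdd (Multiplicative.ofAdd (MonoidAlgebra.of ℤ G h • Multiplicative.toAdd v)))
    rw [map_mul, mul_smul]
    rfl

variable (π : FreeGroup (Fin n) →* G)

/-- The homomorphism from the free group to the semidirect product encoding
Fox derivatives. -/
noncomputable def foxHom :
    FreeGroup (Fin n) →* (Multiplicative (Fin n → MonoidAlgebra ℤ G)) ⋊[phiAct] G :=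
  FreeGroup.lift fun i => ⟨Multiplicative.ofAdd (Pi.single i 1), π (FreeGroup.of i)⟩

lemma foxHom_right (w : FreeGroup (Fin n)) : (foxHom π w).right = π w := by
  have h : SemidirectProduct.rightHom.comp (foxHom π) = π := by
    apply FreeGroup.ext_hom
    intro a
    simp [foxHom]
  exact DFunLike.congr_fun h w

/-- The (total) Fox derivative of a word, relative to `π`. -/
noncomputable def fox (w : FreeGroup (Fin n)) : Fin n → MonoidAlgebra ℤ G :=
  Multiplicative.toAdd (foxHom π w).left

lemma fox_one : fox π 1 = 0 := by simp [fox]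

lemma fox_of (i : Fin n) : fox π (FreeGroup.of i) = Pi.single i 1 := by
  simp [fox, foxHom]

lemma fox_mul (u v : FreeGroup (Fin n)) :
    fox π (u * v) = fox π u + MonoidAlgebra.of ℤ G (π u) • fox π v := by
  unfold fox
  rw [map_mul, SemidirectProduct.mul_left, foxHom_right]
  rfl

lemma fox_inv (u : FreeGroup (Fin n)) :
    fox π u⁻¹ = -(MonoidAlgebra.of ℤ G (π u⁻¹) • fox π u) := by
  have h := fox_mul π u⁻¹ u
  rw [inv_mul_cancel, fox_one] at h
  rw [eq_neg_iff_add_eq_zero]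
  exact h.symm


/-- The linear map `(ι → R) →ₗ[R] V`, `a ↦ ∑ i, a i • v i`. -/
noncomputable def sumSmul {R V : Type*} [Ring R] [AddCommGroup V] [Module R V]
    {ι : Type*} [Fintype ι] (v : ι → V) : (ι → R) →ₗ[R] V where
  toFun a := ∑ i, a i • v i
  map_add' a b := by
    show (∑ i, (a i + b i) • v i) = (∑ i, a i • v i) + ∑ i, b i • v i
    simp [add_smul, Finset.sum_add_distrib]
  map_smul' r a := by
    show (∑ i, (r * a i) • v i) = r • ∑ i, a i • v i
    rw [Finset.smul_sum]
    exact Finset.sum_congr rfl fun i _ => mul_smul r (a i) (v i)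

@[simp] lemma sumSmul_single {R V : Type*} [Ring R] [AddCommGroup V] [Module R V]
    {ι : Type*} [Fintype ι] [DecidableEq ι] (v : ι → V) (i : ι) (r : R) :
    sumSmul v (Pi.single i r) = r • v i := by
  have h0 : sumSmul v (Pi.single i r) = ∑ j, (Pi.single i r : ι → R) j • v j := rfl
  rw [h0, Finset.sum_eq_single i]
  · simp
  · intro j _ hj; simp [Pi.single_eq_of_ne hj]
  · simp

/-- `d₁ : (ℤG)ⁿ → ℤG`, `eᵢ ↦ π(xᵢ) - 1`. -/
noncomputable def dOne : (Fin n → MonoidAlgebra ℤ G) →ₗ[MonoidAlgebra ℤ G] MonoidAlgebra ℤ G :=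
  sumSmul (fun i => MonoidAlgebra.of ℤ G (π (FreeGroup.of i)) - 1)

lemma dOne_fox (w : FreeGroup (Fin n)) :
    dOne π (fox π w) = MonoidAlgebra.of ℤ G (π w) - 1 := by
  induction w using FreeGroup.induction_on with
  | C1 =>
      rw [fox_one, map_zero, map_one]
      simp [MonoidAlgebra.one_def]
  | of i =>
      show dOne π (fox π (FreeGroup.of i)) = MonoidAlgebra.of ℤ G (π (FreeGroup.of i)) - 1
      rw [fox_of]
      show sumSmul _ (Pi.single i (1 : MonoidAlgebra ℤ G)) = _
      rw [sumSmul_single, one_smul]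
  | inv_of i h =>
      have h2 : MonoidAlgebra.of ℤ G (π (FreeGroup.of i)⁻¹) * MonoidAlgebra.of ℤ G (π (FreeGroup.of i)) = 1 := by
        rw [← map_mul, ← map_mul, inv_mul_cancel, map_one, map_one]
      rw [fox_inv, map_neg, map_smul, h, smul_eq_mul, mul_sub, mul_one, h2, neg_sub]
  | mul u v hu hv =>
      rw [fox_mul, map_add, map_smul, hu, hv, map_mul π u v,
        map_mul (MonoidAlgebra.of ℤ G), smul_eq_mul, mul_sub, mul_one]
      noncomm_ring


/-- `d₂ : (ℤG)^m → (ℤG)^n`, `e_j ↦ fox derivative of relator j`. -/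
noncomputable def dTwo {m : ℕ} (rel : Fin m → FreeGroup (Fin n)) :
    (Fin m → MonoidAlgebra ℤ G) →ₗ[MonoidAlgebra ℤ G] (Fin n → MonoidAlgebra ℤ G) :=
  sumSmul (fun j => fox π (rel j))

lemma fox_rel_mem {m : ℕ} (rel : Fin m → FreeGroup (Fin n)) (j : Fin m) :
    fox π (rel j) ∈ LinearMap.range (dTwo π rel) :=
  ⟨Pi.single j 1, by rw [dTwo, sumSmul_single, one_smul]⟩

lemma fox_mem {m : ℕ} (rel : Fin m → FreeGroup (Fin n))
    (hN : π.ker = Subgroup.normalClosure (Set.range rel))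
    {w : FreeGroup (Fin n)} (hw : π w = 1) :
    fox π w ∈ LinearMap.range (dTwo π rel) := by
  set M := LinearMap.range (dTwo π rel) with hMdef
  let K : Subgroup (FreeGroup (Fin n)) :=
    { carrier := {w | π w = 1 ∧ fox π w ∈ M}
      one_mem' := ⟨map_one π, by rw [fox_one]; exact M.zero_mem⟩
      mul_mem' := by
        rintro a b ⟨ha1, ha2⟩ ⟨hb1, hb2⟩
        refine ⟨by rw [map_mul, ha1, hb1, one_mul], ?_⟩
        rw [fox_mul, ha1]
        refine M.add_mem ha2 ?_
        rw [map_one, one_smul]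
        exact hb2
      inv_mem' := by
        rintro a ⟨ha1, ha2⟩
        refine ⟨by rw [map_inv, ha1, inv_one], ?_⟩
        rw [fox_inv, map_inv, ha1, inv_one, map_one, one_smul]
        exact M.neg_mem ha2 }
  have hKnormal : K.Normal := by
    constructor
    rintro a ⟨ha1, ha2⟩ u
    have hπ : π (u * a * u⁻¹) = 1 := by
      rw [map_mul, map_mul, ha1, map_inv, mul_one, mul_inv_cancel]
    refine ⟨hπ, ?_⟩
    have key : fox π (u * a * u⁻¹) = MonoidAlgebra.of ℤ G (π u) • fox π a := by
      rw [fox_mul, fox_mul, fox_inv, map_mul π, ha1, mul_one, map_inv π, smul_neg,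
        smul_smul, ← map_mul, mul_inv_cancel, map_one, one_smul]
      abel
    rw [key]
    exact M.smul_mem _ ha2
  have hsub : Set.range rel ⊆ (K : Set (FreeGroup (Fin n))) := by
    rintro _ ⟨j, rfl⟩
    have h1 : rel j ∈ π.ker := by
      rw [hN]
      exact Subgroup.subset_normalClosure ⟨j, rfl⟩
    exact ⟨h1, fox_rel_mem π rel j⟩
  have hle : Subgroup.normalClosure (Set.range rel) ≤ K :=
    Subgroup.normalClosure_le_normal hsub
  have hwK : w ∈ K := hle (by rw [← hN]; exact hw)
  exact hwK.2

lemma ker_dOne_le {m : ℕ} (hsurj : Function.Surjective π)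
    (rel : Fin m → FreeGroup (Fin n))
    (hN : π.ker = Subgroup.normalClosure (Set.range rel)) :
    LinearMap.ker (dOne π) ≤ LinearMap.range (dTwo π rel) := by
  classical
  set M := LinearMap.range (dTwo π rel) with hMdef
  let σ : G → FreeGroup (Fin n) := Function.surjInv hsurj
  have hσ : ∀ g, π (σ g) = g := fun g => Function.surjInv_eq hsurj g
  let T : MonoidAlgebra ℤ G →ₗ[ℤ] (Fin n → MonoidAlgebra ℤ G) :=
    Finsupp.lift _ ℤ G (fun g => fox π (σ g)) ∘ₗ (MonoidAlgebra.coeffLinearEquiv ℤ).toLinearMap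
  have hT : ∀ g : G, T (MonoidAlgebra.of ℤ G g) = fox π (σ g) := by
    intro g
    show (Finsupp.lift (Fin n → MonoidAlgebra ℤ G) ℤ G (fun g => fox π (σ g)))
        (Finsupp.single g 1) = fox π (σ g)
    rw [Finsupp.lift_apply, Finsupp.sum_single_index (by rw [zero_smul]), one_smul]
  have key : ∀ (i : Fin n) (g : G),
      Pi.single i (MonoidAlgebra.of ℤ G g) -
        T (dOne π (Pi.single i (MonoidAlgebra.of ℤ G g))) ∈ M := by
    intro i g
    set xi := π (FreeGroup.of i) with hxi
    have hd : dOne π (Pi.single i (MonoidAlgebra.of ℤ G g)) =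
        MonoidAlgebra.of ℤ G (g * xi) - MonoidAlgebra.of ℤ G g := by
      rw [dOne, sumSmul_single, smul_eq_mul, mul_sub, mul_one, ← map_mul]
    set w2 := σ (g * xi) with hw2
    have hfox : fox π (σ g * FreeGroup.of i * w2⁻¹) =
        fox π (σ g) + Pi.single i (MonoidAlgebra.of ℤ G g) - fox π w2 := by
      rw [fox_mul, fox_mul, fox_inv, fox_of, map_mul π, hσ, map_inv π, hw2, hσ,
        smul_neg, smul_smul, ← map_mul, ← hxi, mul_inv_cancel, map_one, one_smul]
      have : MonoidAlgebra.of ℤ G g • (Pi.single i (1 : MonoidAlgebra ℤ G) :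
            Fin n → MonoidAlgebra ℤ G)
          = (Pi.single i (MonoidAlgebra.of ℤ G g) : Fin n → MonoidAlgebra ℤ G) := by
        rw [← Pi.single_smul', smul_eq_mul, mul_one]
      rw [this]
      abel
    have hmem : fox π (σ g * FreeGroup.of i * w2⁻¹) ∈ M := by
      apply fox_mem π rel hN
      rw [map_mul, map_mul, hσ, map_inv, hw2, hσ, ← hxi, mul_inv_cancel]
    have heq : Pi.single i (MonoidAlgebra.of ℤ G g) -
        T (dOne π (Pi.single i (MonoidAlgebra.of ℤ G g))) =
        fox π (σ g * FreeGroup.of i * w2⁻¹) := by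
      rw [hd, map_sub, hT, hT, hfox, ← hw2]
      abel
    rw [heq]
    exact hmem
  have main : ∀ a : Fin n → MonoidAlgebra ℤ G, a - T (dOne π a) ∈ M := by
    let p : Submodule ℤ (Fin n → MonoidAlgebra ℤ G) :=
      { carrier := {a | a - T (dOne π a) ∈ M}
        zero_mem' := by
          show (0 : Fin n → MonoidAlgebra ℤ G) - T (dOne π 0) ∈ M
          rw [map_zero, map_zero, sub_zero]
          exact M.zero_mem
        add_mem' := by
          intro a b ha hb
          show (a + b) - T (dOne π (a + b)) ∈ M
          rw [map_add, map_add]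
          have : (a + b) - (T (dOne π a) + T (dOne π b)) =
              (a - T (dOne π a)) + (b - T (dOne π b)) := by abel
          rw [this]
          exact M.add_mem ha hb
        smul_mem' := by
          intro c a ha
          show (c • a) - T (dOne π (c • a)) ∈ M
          rw [map_zsmul, map_zsmul]
          have : (c • a) - c • T (dOne π a) = c • (a - T (dOne π a)) := by
            rw [smul_sub]
          rw [this]
          exact M.smul_of_tower_mem c ha }
    have hbase : ∀ (i : Fin n) (x : MonoidAlgebra ℤ G),
        (Pi.single i x : Fin n → MonoidAlgebra ℤ G) ∈ p := by
      intro i x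
      induction x using MonoidAlgebra.induction_on with
      | of g => exact key i g
      | add f g hf hg =>
          have : (Pi.single i (f + g) : Fin n → MonoidAlgebra ℤ G) =
              Pi.single i f + Pi.single i g := by
            funext j
            rcases eq_or_ne j i with h | h
            · subst h; rw [Pi.single_eq_same, Pi.add_apply, Pi.single_eq_same, Pi.single_eq_same]
            · rw [Pi.single_eq_of_ne h, Pi.add_apply, Pi.single_eq_of_ne h, Pi.single_eq_of_ne h,
                add_zero]
          rw [this]; exact p.add_mem hf hg
      | smul r f hf =>
          have : (Pi.single i (r • f) : Fin n → MonoidAlgebra ℤ G) =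
              r • Pi.single i f := Pi.single_smul' i r f
          rw [this]; exact p.smul_mem r hf
    intro a
    have := Finset.univ_sum_single a
    rw [← this]
    exact Submodule.sum_mem p fun i _ => hbase i (a i)
  intro a ha
  rw [LinearMap.mem_ker] at ha
  have := main a
  rw [ha, map_zero, sub_zero] at this
  exact this

end FoxAux

section MoreAux

variable {n : ℕ} {G : Type*} [Group G]

lemma augRingHom_of (g : G) : augRingHom G (MonoidAlgebra.of ℤ G g) = 1 := by
  show ((MonoidAlgebra.lift ℤ ℤ G) 1) (MonoidAlgebra.of ℤ G g) = 1
  rw [MonoidAlgebra.lift_of]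
  rfl

lemma augRingHom_single_one (z : ℤ) : augRingHom G (MonoidAlgebra.single (1 : G) z) = z := by
  show ((MonoidAlgebra.lift ℤ ℤ G) 1) (MonoidAlgebra.single (1 : G) z) = z
  rw [MonoidAlgebra.lift_single]
  simp

variable (π : FreeGroup (Fin n) →* G)

lemma sub_single_aug_mem (hsurj : Function.Surjective π) (f : MonoidAlgebra ℤ G) :
    f - MonoidAlgebra.single (1 : G) (augRingHom G f) ∈ LinearMap.range (dOne π) := by
  classical
  let σ : G → FreeGroup (Fin n) := Function.surjInv hsurj
  have hσ : ∀ g, π (σ g) = g := fun g => Function.surjInv_eq hsurj g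
  set Rg := LinearMap.range (dOne π) with hRg
  let q : Submodule ℤ (MonoidAlgebra ℤ G) :=
    { carrier := {f | f - MonoidAlgebra.single (1 : G) (augRingHom G f) ∈ Rg}
      zero_mem' := by
        show (0 : MonoidAlgebra ℤ G) -
          MonoidAlgebra.single (1 : G) (augRingHom G 0) ∈ Rg
        rw [map_zero]
        have : MonoidAlgebra.single (1 : G) (0 : ℤ) = 0 := MonoidAlgebra.single_zero 1
        rw [this, sub_zero]
        exact Rg.zero_mem
      add_mem' := by
        intro a b ha hb
        show (a + b) - MonoidAlgebra.single (1 : G) (augRingHom G (a + b)) ∈ Rg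
        rw [map_add]
        have h1 : MonoidAlgebra.single (1 : G) (augRingHom G a + augRingHom G b) =
            MonoidAlgebra.single (1 : G) (augRingHom G a) +
              MonoidAlgebra.single (1 : G) (augRingHom G b) := MonoidAlgebra.single_add 1 _ _
        rw [h1]
        have h2 : (a + b) -
            (MonoidAlgebra.single (1 : G) (augRingHom G a) +
              MonoidAlgebra.single (1 : G) (augRingHom G b)) =
            (a - MonoidAlgebra.single (1 : G) (augRingHom G a)) +
              (b - MonoidAlgebra.single (1 : G) (augRingHom G b)) := by abel
        rw [h2]
        exact Rg.add_mem ha hb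
      smul_mem' := by
        intro c a ha
        show (c • a) - MonoidAlgebra.single (1 : G) (augRingHom G (c • a)) ∈ Rg
        rw [map_zsmul]
        have h1 : MonoidAlgebra.single (1 : G) (c • augRingHom G a) =
            c • MonoidAlgebra.single (1 : G) (augRingHom G a) :=
          (MonoidAlgebra.smul_single c 1 (augRingHom G a)).symm
        rw [h1, ← smul_sub]
        exact Rg.smul_of_tower_mem c ha }
  have : ∀ f : MonoidAlgebra ℤ G, f ∈ q := by
    intro f
    induction f using MonoidAlgebra.induction_on with
    | of g =>
        show MonoidAlgebra.of ℤ G g -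
          MonoidAlgebra.single (1 : G) (augRingHom G (MonoidAlgebra.of ℤ G g)) ∈ Rg
        rw [augRingHom_of]
        have h1 : MonoidAlgebra.single (1 : G) (1 : ℤ) = (1 : MonoidAlgebra ℤ G) :=
          MonoidAlgebra.one_def.symm
        rw [h1]
        exact ⟨fox π (σ g), by rw [dOne_fox, hσ]⟩
    | add f g hf hg => exact q.add_mem hf hg
    | smul r f hf => exact q.smul_mem r hf
  exact this f

end MoreAux

theorem stmt_6 {G : Type*} [Group G] {e₁ e₂ : ℕ} (hG : HasPresentation G e₁ e₂) :
    ∃ (d₂ : (Fin e₂ → MonoidAlgebra ℤ G) →ₗ[MonoidAlgebra ℤ G]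
        (Fin e₁ → MonoidAlgebra ℤ G))
      (d₁ : (Fin e₁ → MonoidAlgebra ℤ G) →ₗ[MonoidAlgebra ℤ G] MonoidAlgebra ℤ G),
      LinearMap.range d₂ = LinearMap.ker d₁ ∧
      LinearMap.range d₁ = LinearMap.ker (augLinearMap G) ∧
      Function.Surjective (augLinearMap G) := by
    classical
  obtain ⟨rel, ⟨e⟩⟩ := hG
  set N := Subgroup.normalClosure (Set.range rel) with hNdef
  let π : FreeGroup (Fin e₁) →* G :=
    (e.symm : (FreeGroup (Fin e₁) ⧸ N) ≃* G).toMonoidHom.comp (QuotientGroup.mk' N)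
  have hsurj : Function.Surjective π :=
    e.symm.surjective.comp (QuotientGroup.mk'_surjective N)
  have hN : π.ker = N := by
    ext w
    rw [MonoidHom.mem_ker]
    show e.symm (QuotientGroup.mk' N w) = 1 ↔ w ∈ N
    rw [MulEquiv.map_eq_one_iff]
    exact QuotientGroup.eq_one_iff w
  have hrel : ∀ j, π (rel j) = 1 := fun j => by
    have : rel j ∈ π.ker := by
      rw [hN]
      exact Subgroup.subset_normalClosure ⟨j, rfl⟩
    exact this
  refine ⟨dTwo π rel, dOne π, ?_, ?_, ?_⟩
  · -- range d₂ = ker d₁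
    apply le_antisymm
    · rintro _ ⟨a, rfl⟩
      rw [LinearMap.mem_ker]
      show dOne π (∑ j, a j • fox π (rel j)) = 0
      rw [map_sum]
      refine Finset.sum_eq_zero fun j _ => ?_
      rw [map_smul, dOne_fox, hrel j, map_one, sub_self, smul_zero]
    · exact ker_dOne_le π hsurj rel hN
  · -- range d₁ = ker aug
    apply le_antisymm
    · rintro _ ⟨a, rfl⟩
      rw [LinearMap.mem_ker]
      show augRingHom G (∑ i, a i • (MonoidAlgebra.of ℤ G (π (FreeGroup.of i)) - 1)) = 0
      rw [map_sum]
      refine Finset.sum_eq_zero fun i _ => ?_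
      rw [smul_eq_mul, map_mul, map_sub, map_one, augRingHom_of, sub_self, mul_zero]
    · intro f hf
      rw [LinearMap.mem_ker] at hf
      have h0 : augRingHom G f = 0 := hf
      have := sub_single_aug_mem π hsurj f
      rw [h0] at this
      have h1 : MonoidAlgebra.single (1 : G) (0 : ℤ) = 0 := MonoidAlgebra.single_zero 1
      rw [h1, sub_zero] at this
      exact this
  · -- surjectivity of aug
    intro z
    refine ⟨MonoidAlgebra.single (1 : G) z, ?_⟩
    show augRingHom G (MonoidAlgebra.single (1 : G) z) = z
    exact augRingHom_single_one z
end

section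
/- Let H be a group, let m ≥ 1, and let a₁, …, a_m be integers whose greatest common divisor is 1. Let v ∈ (ℤH)^m be the element whose i-th coordinate is a_i·1 (the image of a_i under ℤ → ℤH). Then for every ℤH-submodule N of (ℤH)^m with v ∈ N, the quotient module (ℤH)^m / N can be generated by m − 1 elements as a ℤH-module. -/
open Submodule Set
set_option maxHeartbeats 1000000
set_option synthInstance.maxHeartbeats 400000

theorem stmt_8 {H : Type*} [Group H] (m : ℕ) (hm : 1 ≤ m) (a : Fin m → ℤ)
    (ha : Finset.univ.gcd a = 1)
    (v : Fin m → MonoidAlgebra ℤ H)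
    (hv : v = fun i => algebraMap ℤ (MonoidAlgebra ℤ H) (a i))
    (N : Submodule (MonoidAlgebra ℤ H) (Fin m → MonoidAlgebra ℤ H)) (hvN : v ∈ N) :
    ∃ φ : (Fin (m - 1) → MonoidAlgebra ℤ H) →ₗ[MonoidAlgebra ℤ H]
        ((Fin m → MonoidAlgebra ℤ H) ⧸ N),
      Function.Surjective φ := by
  classical
  -- Bezout: ∃ c, ∑ c i • a i = 1
  have hbez : ∃ c : Fin m → ℤ, ∑ i, c i • a i = 1 := by
    have htop : Ideal.span (Set.range a) = ⊤ := by
      obtain ⟨d, hd⟩ := IsPrincipalIdealRing.principal (Ideal.span (Set.range a))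
      have hdvd : ∀ i, d ∣ a i := fun i => by
        have h : a i ∈ Ideal.span (Set.range a) := Ideal.subset_span ⟨i, rfl⟩
        rwa [hd, Ideal.submodule_span_eq, Ideal.mem_span_singleton] at h
      have hd1 : d ∣ 1 := ha ▸ Finset.dvd_gcd (fun i _ => hdvd i)
      rw [hd, Ideal.submodule_span_eq]
      exact Ideal.span_singleton_eq_top.mpr (isUnit_of_dvd_one hd1)
    have h1 : (1 : ℤ) ∈ Ideal.span (Set.range a) := htop ▸ trivial
    exact (mem_span_range_iff_exists_fun ℤ).mp h1
  obtain ⟨c, hc⟩ := hbez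
  -- linear form g with g a = 1
  let g : (Fin m → ℤ) →ₗ[ℤ] ℤ := Fintype.linearCombination ℤ c
  have hga : g a = 1 := by
    simpa [g, Fintype.linearCombination_apply, mul_comm, smul_eq_mul] using hc
  -- basis of the kernel
  obtain ⟨n, b⟩ := Submodule.basisOfPid (Pi.basisFun ℤ (Fin m)) (LinearMap.ker g)
  let w : Fin n → (Fin m → ℤ) := fun i => (b i : Fin m → ℤ)
  have hw_indep : LinearIndependent ℤ w :=
    b.linearIndependent.map' (LinearMap.ker g).subtype (ker_subtype _)
  have hspanw : span ℤ (Set.range w) = LinearMap.ker g := by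
    have : Set.range w = (LinearMap.ker g).subtype '' (Set.range b) := by
      rw [← Set.range_comp]; rfl
    rw [this, ← Submodule.map_span, b.span_eq, Submodule.map_subtype_top]
  have hnotmem : a ∉ span ℤ (Set.range w) := by
    rw [hspanw, LinearMap.mem_ker, hga]; exact one_ne_zero
  have hcons : LinearIndependent ℤ (Fin.cons a w : Fin (n+1) → (Fin m → ℤ)) := by
    refine LinearIndependent.fin_cons' a w hw_indep ?_
    rintro t y hy hty
    rw [hspanw, LinearMap.mem_ker] at hy
    have := congrArg g hty
    rw [map_add, map_smul, hga, hy, add_zero, map_zero, smul_eq_mul, mul_one] at this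
    exact this
  have hnm : n + 1 ≤ m := by
    have := hcons.fintype_card_le_finrank
    simpa [Module.finrank_fin_fun] using this
  -- a and w span over ℤ
  have hspan : span ℤ (insert a (Set.range w)) = ⊤ := by
    rw [eq_top_iff]
    rintro x -
    rw [Submodule.mem_span_insert]
    refine ⟨g x, x - g x • a, ?_, by abel⟩
    rw [hspanw, LinearMap.mem_ker, map_sub, map_smul, hga, smul_eq_mul, mul_one, sub_self]
  -- transfer map
  let F : (Fin m → ℤ) →ₗ[ℤ] (Fin m → (MonoidAlgebra ℤ H)) :=
    { toFun := fun x i => algebraMap ℤ (MonoidAlgebra ℤ H) (x i)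
      map_add' := fun x y => by funext i; simp
      map_smul' := fun z x => by
        funext i
        simp [Algebra.smul_def, map_mul] }
  have hFspan : span (MonoidAlgebra ℤ H) (F '' (insert a (Set.range w))) = ⊤ := by
    rw [eq_top_iff, ← (Pi.basisFun (MonoidAlgebra ℤ H) (Fin m)).span_eq, Submodule.span_le]
    rintro _ ⟨i, rfl⟩
    have h1 : (Pi.basisFun (MonoidAlgebra ℤ H) (Fin m)) i = F (Pi.single i (1 : ℤ)) := by
      funext j
      simp [F, Pi.basisFun_apply, Pi.single_apply, apply_ite (algebraMap ℤ (MonoidAlgebra ℤ H))]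
    have h2 : Pi.single i (1:ℤ) ∈ span ℤ (insert a (Set.range w)) := hspan ▸ trivial
    have h3 : F (Pi.single i (1:ℤ)) ∈ span ℤ (F '' (insert a (Set.range w))) := by
      rw [← Submodule.map_span]; exact Submodule.mem_map_of_mem h2
    have h4 : span ℤ (F '' (insert a (Set.range w))) ≤
        (span (MonoidAlgebra ℤ H) (F '' (insert a (Set.range w)))).restrictScalars ℤ :=
      Submodule.span_le.2 Submodule.subset_span
    rw [SetLike.mem_coe, h1]
    exact h4 h3
  -- pass to quotient
  let π : (Fin m → (MonoidAlgebra ℤ H)) →ₗ[(MonoidAlgebra ℤ H)] ((Fin m → (MonoidAlgebra ℤ H)) ⧸ N) := N.mkQ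
  have hπFa : π (F a) = 0 := by
    have : F a = v := by rw [hv]; rfl
    rw [this, Submodule.mkQ_apply, Submodule.Quotient.mk_eq_zero]
    exact hvN
  have hQspan : span (MonoidAlgebra ℤ H) (Set.range fun i : Fin n => π (F (w i))) = ⊤ := by
    have h0 : span (MonoidAlgebra ℤ H) (π '' (F '' (insert a (Set.range w)))) = ⊤ := by
      rw [Submodule.span_image, hFspan, Submodule.map_top, Submodule.range_mkQ]
    rw [Set.image_insert_eq, Set.image_insert_eq, hπFa, Submodule.span_insert_zero,
      ← Set.range_comp, ← Set.range_comp] at h0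
    exact h0
  -- pad to Fin (m-1)
  let u : Fin (m - 1) → ((Fin m → (MonoidAlgebra ℤ H)) ⧸ N) :=
    fun j => if h : (j : ℕ) < n then π (F (w ⟨j, h⟩)) else 0
  have huspan : span (MonoidAlgebra ℤ H) (Set.range u) = ⊤ := by
    rw [eq_top_iff, ← hQspan, Submodule.span_le]
    rintro _ ⟨i, rfl⟩
    have hin : (i : ℕ) < m - 1 := by omega
    have huw : u ⟨i, hin⟩ = π (F (w i)) := by simp [u, i.2]
    exact Submodule.subset_span ⟨⟨i, hin⟩, huw⟩
  refine ⟨(Finsupp.linearCombination (MonoidAlgebra ℤ H) u).comp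
    (Finsupp.linearEquivFunOnFinite (MonoidAlgebra ℤ H) (MonoidAlgebra ℤ H)
      (Fin (m-1))).symm.toLinearMap, ?_⟩
  have h1 : Function.Surjective (Finsupp.linearCombination (MonoidAlgebra ℤ H) u) := by
    rw [← LinearMap.range_eq_top, Finsupp.range_linearCombination, huspan]
  exact h1.comp (LinearEquiv.surjective _)
end
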